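/- Let p > 2 and B > 0 be real numbers; set α₁ = B^(−p/(p−2)), d = (1/2 − 1/p)·α₁², and g(x) = x²/2 − (B^p/p)·x^p for x ≥ 0. Let E₀ < d, and let x : [0, ∞) → ℝ be a continuous function with x(t) ≥ 0 and g(x(t)) ≤ E₀ for all t ≥ 0, and x(0) > α₁. Then there exists α₂ > α₁ with g(α₂) = E₀ such that x(t) ≥ α₂ for all t ≥ 0. -/

import Mathlib

/-!
Beyond its maximum point `α₁`, where it takes the value `d`, the profile `g` is strictly
decreasing, so for `E₀ < d` the intermediate value theorem gives a unique `α₂ > α₁` with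
`g α₂ = E₀`, and `g > E₀` on the gap `[α₁, α₂)`. The continuous function `x` satisfies
`g ∘ x ≤ E₀`, so it never enters the gap; having started at or above `α₂`, it cannot get below the
gap without crossing it, again by the intermediate value theorem.
-/

open Set

/-- The lower bound `g(‖∇u‖₂) ≤ E(t)` of the energy given by the Sobolev inequality `‖u‖_p ≤ B ‖∇u‖₂`. -/
noncomputable def energyProfile (B p y : ℝ) : ℝ := y ^ 2 / 2 - B ^ p / p * y ^ p

/-- The maximum point `α₁` of `energyProfile B p` when `p > 2`. -/
noncomputable def criticalNorm (B p : ℝ) : ℝ := B ^ (-(p / (p - 2)))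

section IntermediateValue

variable {s : Set ℝ} {x : ℝ → ℝ} {a b t₀ : ℝ}

theorem le_of_forall_notMem_Ico (hs : IsPreconnected s) (hx : ContinuousOn x s) (hab : a < b)
    (hgap : ∀ t ∈ s, x t ∉ Ico a b) (ht₀ : t₀ ∈ s) (hb : b ≤ x t₀) : ∀ t ∈ s, b ≤ x t := by
  intro t ht
  by_contra! hxt
  obtain ⟨u, hu, hxu⟩ := hs.intermediate_value ht ht₀ hx
    (show max a (x t) ∈ Icc (x t) (x t₀) from ⟨le_max_right _ _, max_le (by linarith) (by linarith)⟩)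
  exact hgap u hu (hxu ▸ ⟨le_max_left _ _, max_lt hab hxt⟩)

theorem exists_forall_le_of_strictAntiOn {g : ℝ → ℝ} {E : ℝ} (hs : IsPreconnected s)
    (hx : ContinuousOn x s) (hgc : ContinuousOn g (Ici a)) (hga : StrictAntiOn g (Ici a))
    (hE : E < g a) (hgx : ∀ t ∈ s, g (x t) ≤ E) (ht₀ : t₀ ∈ s) (hinit : a < x t₀) :
    ∃ b, a < b ∧ g b = E ∧ ∀ t ∈ s, b ≤ x t := by
  obtain ⟨b, ⟨hab, hbx⟩, hgb⟩ := intermediate_value_Icc' hinit.le (hgc.mono Icc_subset_Ici_self)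
    ⟨hgx t₀ ht₀, hE.le⟩
  have hab : a < b := hab.lt_of_ne (by rintro rfl; exact hE.ne' hgb)
  have hgap : ∀ t ∈ s, x t ∉ Ico a b := fun t ht ⟨hat, htb⟩ =>
    (hgx t ht).not_gt (hgb ▸ hga hat hab.le htb)
  exact ⟨b, hab, hgb, le_of_forall_notMem_Ico hs hx hab hgap ht₀ hbx⟩

end IntermediateValue

section EnergyProfile

variable {B p : ℝ}

theorem rpow_mul_criticalNorm_rpow (hB : 0 < B) (hp : p ≠ 2) :
    B ^ p * criticalNorm B p ^ (p - 2) = 1 := by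
  have hp2 : p - 2 ≠ 0 := sub_ne_zero.mpr hp
  rw [criticalNorm, ← Real.rpow_mul hB.le, ← Real.rpow_add hB, neg_mul,
    div_mul_cancel₀ _ hp2, add_neg_cancel, Real.rpow_zero]

theorem energyProfile_criticalNorm (hB : 0 < B) (hp : p ≠ 2) :
    energyProfile B p (criticalNorm B p) = (1 / 2 - 1 / p) * criticalNorm B p ^ 2 := by
  have hα : 0 < criticalNorm B p := Real.rpow_pos_of_pos hB _
  have hαp : B ^ p * criticalNorm B p ^ p = criticalNorm B p ^ 2 := by
    rw [← Real.rpow_natCast, ← one_mul (criticalNorm B p ^ ((2 : ℕ) : ℝ)),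
      ← rpow_mul_criticalNorm_rpow hB hp, mul_assoc, ← Real.rpow_add hα]
    norm_num
  rw [energyProfile, div_mul_eq_mul_div, hαp]
  ring

theorem continuous_energyProfile (hp : 0 ≤ p) : Continuous (energyProfile B p) :=
  ((continuous_pow 2).div_const 2).sub (continuous_const.mul (Real.continuous_rpow_const hp))

theorem hasDerivAt_energyProfile (hp : p ≠ 0) {y : ℝ} (hy : 0 < y) :
    HasDerivAt (energyProfile B p) (y - B ^ p * y ^ (p - 1)) y := by
  have h : HasDerivAt (energyProfile B p) (↑2 * y ^ (2 - 1) / 2 - B ^ p / p * (p * y ^ (p - 1))) y :=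
    ((hasDerivAt_pow 2 y).div_const 2).sub
      ((Real.hasDerivAt_rpow_const (Or.inl hy.ne')).const_mul (B ^ p / p))
  refine h.congr_deriv ?_
  field_simp
  ring

theorem strictAntiOn_energyProfile (hB : 0 < B) (hp : 2 < p) :
    StrictAntiOn (energyProfile B p) (Ici (criticalNorm B p)) := by
  have hα : 0 < criticalNorm B p := Real.rpow_pos_of_pos hB _
  refine strictAntiOn_of_deriv_neg (convex_Ici _) (continuous_energyProfile (by linarith)).continuousOn
    fun y hy => ?_
  rw [interior_Ici] at hy
  have hy0 : 0 < y := hα.trans hy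
  rw [(hasDerivAt_energyProfile (by linarith) hy0).deriv, sub_neg]
  have hgt : 1 < B ^ p * y ^ (p - 2) := by
    rw [← rpow_mul_criticalNorm_rpow hB hp.ne']
    gcongr
    exact hy
  calc y = 1 * y := (one_mul y).symm
    _ < B ^ p * y ^ (p - 2) * y := by gcongr
    _ = B ^ p * y ^ (p - 1) := by
      rw [mul_assoc, ← Real.rpow_add_one hy0.ne']
      ring_nf

end EnergyProfile

theorem vitillaro_lemma_general (p B E₀ : ℝ) (hp : 2 < p) (hB : 0 < B)
    (x : ℝ → ℝ) (hcont : ContinuousOn x (Set.Ici 0))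
    (hE : E₀ < (1 / 2 - 1 / p) * (B ^ (-(p / (p - 2)))) ^ 2)
    (hg : ∀ t : ℝ, 0 ≤ t → (x t) ^ 2 / 2 - B ^ p / p * (x t) ^ p ≤ E₀)
    (hinit : B ^ (-(p / (p - 2))) < x 0) :
    ∃ α₂ : ℝ, B ^ (-(p / (p - 2))) < α₂ ∧
      α₂ ^ 2 / 2 - B ^ p / p * α₂ ^ p = E₀ ∧
      ∀ t : ℝ, 0 ≤ t → α₂ ≤ x t := by
  have hE' : E₀ < energyProfile B p (criticalNorm B p) := by
    rwa [energyProfile_criticalNorm hB hp.ne']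
  exact exists_forall_le_of_strictAntiOn isPreconnected_Ici hcont
    (continuous_energyProfile (by linarith)).continuousOn (strictAntiOn_energyProfile hB hp) hE'
    hg self_mem_Ici hinit

theorem vitillaro_lemma (p B E₀ : ℝ) (hp : 2 < p) (hB : 0 < B)
    (x : ℝ → ℝ) (hcont : ContinuousOn x (Set.Ici 0))
    (hE : E₀ < (1 / 2 - 1 / p) * (B ^ (-(p / (p - 2)))) ^ 2)
    (hx0 : ∀ t : ℝ, 0 ≤ t → 0 ≤ x t)
    (hg : ∀ t : ℝ, 0 ≤ t → (x t) ^ 2 / 2 - B ^ p / p * (x t) ^ p ≤ E₀)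
    (hinit : B ^ (-(p / (p - 2))) < x 0) :
    ∃ α₂ : ℝ, B ^ (-(p / (p - 2))) < α₂ ∧
      α₂ ^ 2 / 2 - B ^ p / p * α₂ ^ p = E₀ ∧
      ∀ t : ℝ, 0 ≤ t → α₂ ≤ x t :=
  vitillaro_lemma_general p B E₀ hp hB x hcont hE hg hinit
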